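/- arXiv:1709.02803 — 4 statements merged into one kernel-verified Lean document; each statement's English description precedes it below -/
import Mathlib

section
/- Let U ⊆ ℝ³ be open, let d : ℝ³ → ℝ be C² on U with ‖∇d(q)‖ = 1 for all q ∈ U, and set ν = ∇d. Let v : ℝ³ → ℝ³ be differentiable on U and let p ∈ U be a point where v is tangential, i.e. v(p)·ν(p) = 0. Then the surface divergence of v equals the surface curl of the rotated field ν × v: div v(p) − ν(p)·( Dv(p) ν(p) ) = (curl(ν × v))(p)·ν(p). (This is the identity Div_S v = Rot_S(ν × v) used in the paper to pass from the velocity v to the rotated unknown w = ν × v.) -/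
noncomputable section
open RealInnerProductSpace

abbrev E3 := EuclideanSpace ℝ (Fin 3)

/-- Build a vector in `ℝ³` from its three Cartesian components. -/
def vec3 (a b c : ℝ) : E3 := (WithLp.equiv 2 (Fin 3 → ℝ)).symm ![a, b, c]

/-- The `i`-th standard basis vector of `ℝ³`. -/
def e3 (i : Fin 3) : E3 := EuclideanSpace.single i 1

/-- Divergence of a vector field: the trace of its Jacobian. -/
def div3 (v : E3 → E3) (p : E3) : ℝ := LinearMap.trace ℝ E3 (fderiv ℝ v p : E3 →ₗ[ℝ] E3)

/-- Curl of a vector field on `ℝ³`. -/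
def curl3 (v : E3 → E3) (p : E3) : E3 :=
  vec3 (fderiv ℝ v p (e3 1) 2 - fderiv ℝ v p (e3 2) 1)
       (fderiv ℝ v p (e3 2) 0 - fderiv ℝ v p (e3 0) 2)
       (fderiv ℝ v p (e3 0) 1 - fderiv ℝ v p (e3 1) 0)

/-- Cross product on `ℝ³`. -/
def cross3 (a b : E3) : E3 :=
  vec3 (a 1 * b 2 - a 2 * b 1) (a 2 * b 0 - a 0 * b 2) (a 0 * b 1 - a 1 * b 0)

/-! The identity is the normal component of `curl (a × b) = (div b) a - (div a) b + (Da) b - (Db) a`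
with `a = ν`, `b = v`. Dotting with `ν` and using `‖ν‖ = 1`, `v ⬝ ν = 0` and `(Dν w) ⬝ ν = 0`
(differentiate `‖ν‖² = 1`) leaves exactly `div v - ν ⬝ (Dv ν)`. -/

open Filter Topology

lemma cross3_eq_crossProduct (a b : E3) :
    cross3 a b = WithLp.toLp 2 (crossProduct (WithLp.ofLp a) (WithLp.ofLp b)) := by
  ext i; fin_cases i <;> simp [cross3, vec3, cross_apply]

def cross3CLM : E3 →L[ℝ] E3 →L[ℝ] E3 :=
  LinearMap.toContinuousLinearMap <| LinearMap.toContinuousLinearMap.toLinearMap ∘ₗ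
    LinearMap.mk₂ ℝ cross3
      (fun a₁ a₂ b => by simp [cross3_eq_crossProduct])
      (fun c a b => by simp [cross3_eq_crossProduct])
      (fun a b₁ b₂ => by simp [cross3_eq_crossProduct])
      (fun c a b => by simp [cross3_eq_crossProduct])

@[simp] lemma cross3CLM_apply (a b : E3) : cross3CLM a b = cross3 a b := rfl

lemma HasFDerivAt.cross3 {f g : E3 → E3} {A B : E3 →L[ℝ] E3} {p : E3}
    (hf : HasFDerivAt f A p) (hg : HasFDerivAt g B p) :
    HasFDerivAt (fun q => cross3 (f q) (g q))
      (cross3CLM.precompR E3 (f p) B + cross3CLM.precompL E3 A (g p)) p :=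
  cross3CLM.hasFDerivAt_of_bilinear hf hg

lemma fderiv_cross3_apply {f g : E3 → E3} {p : E3} (hf : DifferentiableAt ℝ f p)
    (hg : DifferentiableAt ℝ g p) (u : E3) :
    fderiv ℝ (fun q => cross3 (f q) (g q)) p u
      = cross3 (f p) (fderiv ℝ g p u) + cross3 (fderiv ℝ f p u) (g p) := by
  simp [(hf.hasFDerivAt.cross3 hg.hasFDerivAt).fderiv]

lemma LinearMap.trace_eq_sum_apply_single {ι : Type*} [Fintype ι] [DecidableEq ι]
    (T : EuclideanSpace ℝ ι →ₗ[ℝ] EuclideanSpace ℝ ι) :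
    LinearMap.trace ℝ (EuclideanSpace ℝ ι) T = ∑ i, T (EuclideanSpace.single i 1) i := by
  rw [LinearMap.trace_eq_matrix_trace ℝ (EuclideanSpace.basisFun ι ℝ).toBasis T]
  simp [Matrix.trace, LinearMap.toMatrix_apply]

lemma ContinuousLinearMap.apply_eq_sum_smul_single {ι F : Type*} [Fintype ι] [DecidableEq ι]
    [AddCommMonoid F] [Module ℝ F] [TopologicalSpace F] (T : EuclideanSpace ℝ ι →L[ℝ] F)
    (x : EuclideanSpace ℝ ι) :
    T x = ∑ i, x i • T (EuclideanSpace.single i 1) := by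
  conv_lhs => rw [← (EuclideanSpace.basisFun ι ℝ).sum_repr x]
  simp [map_sum]

lemma div3_eq_sum_partials (v : E3 → E3) (p : E3) :
    div3 v p = fderiv ℝ v p (e3 0) 0 + fderiv ℝ v p (e3 1) 1 + fderiv ℝ v p (e3 2) 2 := by
  simp [div3, LinearMap.trace_eq_sum_apply_single, Fin.sum_univ_three, e3]

lemma curl3_cross3 {f g : E3 → E3} {p : E3} (hf : DifferentiableAt ℝ f p)
    (hg : DifferentiableAt ℝ g p) :
    curl3 (fun q => cross3 (f q) (g q)) p
      = div3 g p • f p - div3 f p • g p + fderiv ℝ f p (g p) - fderiv ℝ g p (f p) := by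
  rw [div3_eq_sum_partials, div3_eq_sum_partials,
    (fderiv ℝ f p).apply_eq_sum_smul_single (g p), (fderiv ℝ g p).apply_eq_sum_smul_single (f p)]
  simp only [curl3, fderiv_cross3_apply hf hg]
  ext i
  fin_cases i <;> simp [vec3, cross3, Fin.sum_univ_three, e3] <;> ring

lemma inner_fderiv_apply_self_eq_zero {E F : Type*} [NormedAddCommGroup E] [NormedSpace ℝ E]
    [NormedAddCommGroup F] [InnerProductSpace ℝ F] {f : E → F} {p : E}
    (hf : DifferentiableAt ℝ f p) (hunit : ∀ᶠ q in 𝓝 p, ‖f q‖ = 1) (u : E) :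
    ⟪fderiv ℝ f p u, f p⟫ = 0 := by
  have hconst : (fun q => ⟪f q, f q⟫) =ᶠ[𝓝 p] fun _ => (1 : ℝ) := by
    filter_upwards [hunit] with q hq
    rw [real_inner_self_eq_norm_sq, hq, one_pow]
  have h := DFunLike.congr_fun (hconst.fderiv_eq (𝕜 := ℝ)) u
  simp only [fderiv_inner_apply ℝ hf hf, fderiv_fun_const, Pi.zero_apply,
    zero_apply, real_inner_comm _ (f p)] at h
  linarith

lemma differentiableAt_gradient_of_differentiableAt_fderiv {F : Type*} [NormedAddCommGroup F]
    [InnerProductSpace ℝ F] [CompleteSpace F] {f : F → ℝ} {p : F}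
    (hf : DifferentiableAt ℝ (fderiv ℝ f) p) :
    DifferentiableAt ℝ (gradient f) p :=
  (InnerProductSpace.toDual ℝ F).symm.toContinuousLinearEquiv.differentiableAt.comp p hf

/-- Surface divergence equals the surface curl of the rotated field:
`Div_S v = Rot_S(ν × v)` at a point where `v` is tangential, with `ν = ∇d`
the unit normal of the level surfaces of an eikonal function `d`. -/
theorem divSurf_eq_rotSurf_rotated
    (U : Set E3) (hU : IsOpen U) (d : E3 → ℝ)
    (hd : ContDiffOn ℝ 2 d U)
    (heik : ∀ q ∈ U, ‖gradient d q‖ = 1)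
    (v : E3 → E3) (hv : DifferentiableOn ℝ v U)
    (p : E3) (hp : p ∈ U) (htan : ⟪v p, gradient d p⟫ = 0) :
    div3 v p - ⟪gradient d p, fderiv ℝ v p (gradient d p)⟫ =
      ⟪curl3 (fun q => cross3 (gradient d q) (v q)) p, gradient d p⟫ := by
  set ν := gradient d
  have hUp : U ∈ 𝓝 p := hU.mem_nhds hp
  have hν : DifferentiableAt ℝ ν p := differentiableAt_gradient_of_differentiableAt_fderiv <|
    ((hd.fderiv_of_isOpen hU le_rfl).differentiableOn one_ne_zero).differentiableAt hUp
  have hνν : ⟪ν p, ν p⟫ = 1 := by rw [real_inner_self_eq_norm_sq, heik p hp, one_pow]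
  have hDνν : ⟪fderiv ℝ ν p (v p), ν p⟫ = 0 :=
    inner_fderiv_apply_self_eq_zero hν (eventually_of_mem hUp heik) (v p)
  rw [curl3_cross3 hν (hv.differentiableAt hUp)]
  simp only [inner_sub_left, inner_add_left, real_inner_smul_left, hνν, htan, hDνν]
  rw [real_inner_comm]
  ring
end
end

section
/- Let v : ℝ³ → ℝ³ be differentiable at p ∈ ℝ³ and let ν ∈ ℝ³ be a unit vector with v(p)·ν = 0. Then the tangential projection of the convective term satisfies π_ν( Dv(p) v(p) ) = ½ π_ν( ∇(v·v)(p) ) + ( (curl v)(p)·ν ) ( ν × v(p) ), where ∇(v·v) is the gradient of the scalar function q ↦ v(q)·v(q). (This is the paper's decomposition ∇_v v = ½ Grad_S(v·v) + Rot_S v (ν × v) of the nonlinear term of the surface Navier–Stokes equation.) -/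
/-!
Pointwise, `Dv(p) v(p) = ½ ∇(v·v)(p) + curl v(p) × v(p)` (the Lamb form of the convective term):
since `∇(v·v) = 2 Dv(p)ᵀ v(p)`, this is a coordinate identity between the Jacobian, its transpose
and its antisymmetric part. Projecting onto `ν^⊥` leaves the gradient term alone and turns
`c × u`, for `u ⊥ ν`, into `(c·ν)(ν × u)`.
-/

noncomputable section
open RealInnerProductSpace

/-- Tangential projection: `π_ν(u) = u − (u·ν)ν`. -/
def tproj (ν u : E3) : E3 := u - ⟪u, ν⟫ • ν

lemma inner_eq_sum_three (x y : E3) : ⟪x, y⟫ = x 0 * y 0 + x 1 * y 1 + x 2 * y 2 := by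
  simp [PiLp.inner_apply, Fin.sum_univ_three, mul_comm]

lemma inner_e3 (x : E3) (i : Fin 3) : ⟪x, e3 i⟫ = x i := by
  simp [e3, EuclideanSpace.inner_single_right]

lemma eq_sum_smul_e3 (u : E3) : u = u 0 • e3 0 + u 1 • e3 1 + u 2 • e3 2 := by
  ext j; fin_cases j <;> simp [e3]

lemma inner_gradient_inner_self_left {E F : Type*} [NormedAddCommGroup E] [InnerProductSpace ℝ E]
    [CompleteSpace E] [NormedAddCommGroup F] [InnerProductSpace ℝ F] {v : E → F} {p : E}
    (hv : DifferentiableAt ℝ v p) (w : E) :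
    ⟪gradient (fun q => ⟪v q, v q⟫) p, w⟫ = 2 * ⟪fderiv ℝ v p w, v p⟫ := by
  rw [inner_gradient_left, fderiv_inner_apply ℝ hv hv, real_inner_comm (v p)]
  ring

lemma gradient_inner_self_apply {v : E3 → E3} {p : E3} (hv : DifferentiableAt ℝ v p) (i : Fin 3) :
    gradient (fun q => ⟪v q, v q⟫) p i = 2 * ⟪fderiv ℝ v p (e3 i), v p⟫ := by
  rw [← inner_e3, inner_gradient_inner_self_left hv]

lemma fderiv_apply_self_eq_half_gradient_add_cross {v : E3 → E3} {p : E3}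
    (hv : DifferentiableAt ℝ v p) :
    fderiv ℝ v p (v p) =
      (1 / 2 : ℝ) • gradient (fun q => ⟪v q, v q⟫) p + cross3 (curl3 v p) (v p) := by
  have hexp := congrArg (fderiv ℝ v p) (eq_sum_smul_e3 (v p))
  simp only [map_add, map_smul] at hexp
  ext i
  rw [PiLp.add_apply, PiLp.smul_apply, gradient_inner_self_apply hv, inner_eq_sum_three, hexp]
  fin_cases i <;>
    simp only [Fin.zero_eta, Fin.mk_one, Fin.reduceFinMk, PiLp.add_apply, PiLp.smul_apply,
      smul_eq_mul, curl3, cross3, vec3, WithLp.equiv_symm_apply, Matrix.cons_val_zero,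
      Matrix.cons_val_one, Matrix.cons_val] <;>
    ring

lemma tproj_add (ν x y : E3) : tproj ν (x + y) = tproj ν x + tproj ν y := by
  simp only [tproj, inner_add_left, add_smul]; abel

lemma tproj_smul (ν : E3) (r : ℝ) (x : E3) : tproj ν (r • x) = r • tproj ν x := by
  simp only [tproj, real_inner_smul_left, smul_sub, smul_smul]

lemma tproj_cross3_of_inner_eq_zero {ν u : E3} (hν : ‖ν‖ = 1) (hu : ⟪u, ν⟫ = 0) (c : E3) :
    tproj ν (cross3 c u) = ⟪c, ν⟫ • cross3 ν u := by
  -- the tangential part of `c` crossed with `u` is a multiple of `ν`, which `tproj ν` kills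
  have hν' : ν 0 ^ 2 + ν 1 ^ 2 + ν 2 ^ 2 = 1 := by
    have h := real_inner_self_eq_norm_sq ν
    rw [inner_eq_sum_three, hν] at h
    linarith
  rw [inner_eq_sum_three] at hu
  ext i
  fin_cases i <;>
    simp only [Fin.zero_eta, Fin.mk_one, Fin.reduceFinMk, PiLp.sub_apply, PiLp.smul_apply,
      smul_eq_mul, tproj, cross3, vec3, WithLp.equiv_symm_apply, inner_eq_sum_three,
      Matrix.cons_val_zero, Matrix.cons_val_one, Matrix.cons_val]
  · linear_combination (-(c 1 * u 2 - c 2 * u 1)) * hν' + (-(ν 1 * c 2 - ν 2 * c 1)) * hu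
  · linear_combination (-(c 2 * u 0 - c 0 * u 2)) * hν' + (-(ν 2 * c 0 - ν 0 * c 2)) * hu
  · linear_combination (-(c 0 * u 1 - c 1 * u 0)) * hν' + (-(ν 0 * c 1 - ν 1 * c 0)) * hu

/-- Decomposition of the convective term: for `v` tangential at `p` (w.r.t. the unit
vector `ν`), `π_ν(∇_v v) = ½ π_ν(∇(v·v)) + (Rot_S v)(ν × v)`. -/
theorem convective_term_decomposition
    (v : E3 → E3) (p ν : E3) (hν : ‖ν‖ = 1)
    (hv : DifferentiableAt ℝ v p) (htan : ⟪v p, ν⟫ = 0) :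
    tproj ν (fderiv ℝ v p (v p)) =
      (1 / 2 : ℝ) • tproj ν (gradient (fun q => ⟪v q, v q⟫) p) +
        ⟪curl3 v p, ν⟫ • cross3 ν (v p) := by
  rw [fderiv_apply_self_eq_half_gradient_add_cross hv, tproj_add, tproj_smul,
    tproj_cross3_of_inner_eq_zero hν htan]
end
end

section
/- The vector field v_θ(x,y,z) = (1/(2s))·(−xy/s, s − 2, −yz/s), s = √(x²+z²), is divergence-free away from the y-axis: for every p = (x, y, z) with x² + z² ≠ 0, div v_θ(p) = 0. -/
/-! In the coordinates `(x, y, z)`, `v_θ = (-(y/2)·x/(x²+z²), 1/2 - 1/√(x²+z²), -(y/2)·z/(x²+z²))`.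
The middle component does not depend on `y`, and `(x, z)/(x²+z²)` is the planar point source,
whose divergence `(z² - x²)/(x²+z²)² + (x² - z²)/(x²+z²)²` vanishes off the origin. -/

noncomputable section
open RealInnerProductSpace

/-- The second harmonic vector field on the torus (with `R = 2`, `r = 1/2`):
`v_θ(x,y,z) = (1/(2s))·(−xy/s, s − 2, −yz/s)` with `s = √(x²+z²)`. -/
def vTheta (p : E3) : E3 :=
  (1 / (2 * Real.sqrt (p 0 ^ 2 + p 2 ^ 2))) •
    vec3 (-(p 0 * p 1) / Real.sqrt (p 0 ^ 2 + p 2 ^ 2))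
         (Real.sqrt (p 0 ^ 2 + p 2 ^ 2) - 2)
         (-(p 1 * p 2) / Real.sqrt (p 0 ^ 2 + p 2 ^ 2))


theorem div3_eq_sum_fderiv_apply (v : E3 → E3) (p : E3) :
    div3 v p = ∑ i, fderiv ℝ v p (e3 i) i := by
  rw [div3, LinearMap.trace_eq_sum_inner _ (EuclideanSpace.basisFun (Fin 3) ℝ)]
  simp only [EuclideanSpace.basisFun_apply, ContinuousLinearMap.coe_coe,
    EuclideanSpace.inner_single_left, Real.ringHom_apply, one_mul, e3]

theorem DifferentiableAt.hasDerivAt_apply_add_smul {F ι : Type*} [NormedAddCommGroup F]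
    [NormedSpace ℝ F] [Fintype ι] {v : F → EuclideanSpace ℝ ι} {p : F}
    (hv : DifferentiableAt ℝ v p) (w : F) (i : ι) :
    HasDerivAt (fun t : ℝ => v (p + t • w) i) (fderiv ℝ v p w i) 0 := by
  have hline : HasDerivAt (fun t : ℝ => p + t • w) w 0 := by
    simpa using ((hasDerivAt_id (0 : ℝ)).smul_const w).const_add p
  exact (PiLp.proj 2 (fun _ : ι => ℝ) i).hasFDerivAt.comp_hasDerivAt (0 : ℝ)
    (hv.hasFDerivAt.comp_hasDerivAt_of_eq 0 hline (by simp))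

theorem div3_eq_sum_of_hasDerivAt {v : E3 → E3} {p : E3} (hv : DifferentiableAt ℝ v p)
    {d : Fin 3 → ℝ} (hd : ∀ i, HasDerivAt (fun t : ℝ => v (p + t • e3 i) i) (d i) 0) :
    div3 v p = ∑ i, d i := by
  rw [div3_eq_sum_fderiv_apply]
  exact Finset.sum_congr rfl fun i _ => (hv.hasDerivAt_apply_add_smul (e3 i) i).unique (hd i)

theorem hasDerivAt_div_sq_add_sq {a b : ℝ} (h : a ^ 2 + b ^ 2 ≠ 0) :
    HasDerivAt (fun t : ℝ => (a + t) / ((a + t) ^ 2 + b ^ 2))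
      ((b ^ 2 - a ^ 2) / (a ^ 2 + b ^ 2) ^ 2) 0 := by
  have hnum : HasDerivAt (fun t : ℝ => a + t) 1 0 := (hasDerivAt_id 0).const_add a
  have hden : HasDerivAt (fun t : ℝ => (a + t) ^ 2 + b ^ 2) (2 * a) 0 := by
    simpa using (hnum.fun_pow 2).add_const (b ^ 2)
  refine (hnum.fun_div hden (by simpa using h)).congr_deriv ?_
  simp only [add_zero]
  ring

theorem vTheta_apply_zero (q : E3) :
    vTheta q 0 = -(q 1 / 2) * (q 0 / (q 0 ^ 2 + q 2 ^ 2)) := by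
  have hsq := Real.sq_sqrt (add_nonneg (sq_nonneg (q 0)) (sq_nonneg (q 2)))
  change 1 / (2 * √(q 0 ^ 2 + q 2 ^ 2)) * (-(q 0 * q 1) / √(q 0 ^ 2 + q 2 ^ 2)) = _
  set s := √(q 0 ^ 2 + q 2 ^ 2)
  rw [← hsq]
  ring

theorem vTheta_apply_one (q : E3) :
    vTheta q 1 = (√(q 0 ^ 2 + q 2 ^ 2) - 2) / (2 * √(q 0 ^ 2 + q 2 ^ 2)) := by
  change 1 / (2 * √(q 0 ^ 2 + q 2 ^ 2)) * (√(q 0 ^ 2 + q 2 ^ 2) - 2) = _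
  ring

theorem vTheta_apply_two (q : E3) :
    vTheta q 2 = -(q 1 / 2) * (q 2 / (q 2 ^ 2 + q 0 ^ 2)) := by
  have hsq := Real.sq_sqrt (add_nonneg (sq_nonneg (q 0)) (sq_nonneg (q 2)))
  change 1 / (2 * √(q 0 ^ 2 + q 2 ^ 2)) * (-(q 1 * q 2) / √(q 0 ^ 2 + q 2 ^ 2)) = _
  set s := √(q 0 ^ 2 + q 2 ^ 2)
  rw [add_comm (q 2 ^ 2), ← hsq]
  ring

theorem differentiableAt_vTheta {p : E3} (hp : p 0 ^ 2 + p 2 ^ 2 ≠ 0) :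
    DifferentiableAt ℝ vTheta p := by
  have hp' : p 2 ^ 2 + p 0 ^ 2 ≠ 0 := by rwa [add_comm]
  have hs : √(p 0 ^ 2 + p 2 ^ 2) ≠ 0 := by positivity
  have h2s : 2 * √(p 0 ^ 2 + p 2 ^ 2) ≠ 0 := by positivity
  rw [differentiableAt_euclidean]
  intro i
  fin_cases i
  · simp only [Fin.zero_eta, vTheta_apply_zero]
    fun_prop (disch := assumption)
  · simp only [Fin.mk_one, vTheta_apply_one]
    fun_prop (disch := assumption)
  · simp only [Fin.reduceFinMk, vTheta_apply_two]
    fun_prop (disch := assumption)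

/-- The field `v_θ` is divergence-free away from the y-axis. -/
theorem vTheta_div_free (p : E3) (hp : p 0 ^ 2 + p 2 ^ 2 ≠ 0) :
    div3 vTheta p = 0 := by
  have hp' : p 2 ^ 2 + p 0 ^ 2 ≠ 0 := by rwa [add_comm]
  rw [div3_eq_sum_of_hasDerivAt (differentiableAt_vTheta hp)
    (d := ![-(p 1 / 2) * ((p 2 ^ 2 - p 0 ^ 2) / (p 0 ^ 2 + p 2 ^ 2) ^ 2), 0,
      -(p 1 / 2) * ((p 0 ^ 2 - p 2 ^ 2) / (p 2 ^ 2 + p 0 ^ 2) ^ 2)])]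
  · simp only [Fin.sum_univ_three, Matrix.cons_val_zero, Matrix.cons_val_one, Matrix.cons_val]
    ring
  intro i
  fin_cases i
  · simpa [vTheta_apply_zero, e3] using (hasDerivAt_div_sq_add_sq hp).const_mul (-(p 1 / 2))
  · simpa [vTheta_apply_one, e3] using hasDerivAt_const (0 : ℝ) (vTheta p 1)
  · simpa [vTheta_apply_two, e3] using (hasDerivAt_div_sq_add_sq hp').const_mul (-(p 1 / 2))
end
end

section
/- Let R = 2 and r = 1/2, and let p = (x, y, z) satisfy T(p) = 0 (which forces x² + z² > 0). Then the normal–normal part of the Jacobian of v_θ vanishes in the direction of ∇T: ∇T(p) · ( Dv_θ(p) ∇T(p) ) = 0, where v_θ(x,y,z) = (1/(2s))·(−xy/s, s − 2, −yz/s) with s = √(x²+z²). Combined with div v_θ = 0, this shows that the surface divergence Div_S v_θ = div v_θ − ν·(Dv_θ ν) vanishes on the torus { T = 0 } with unit normal ν = ∇T/‖∇T‖, so v_θ is a harmonic (divergence- and curl-free) tangential field on the torus. -/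
noncomputable section
open RealInnerProductSpace

/-- The torus level function `T(x,y,z) = (x² + y² + z² + R² − r²)² − 4R²(x² + z²)`. -/
def torusT (R r : ℝ) (p : E3) : ℝ :=
  (p 0 ^ 2 + p 1 ^ 2 + p 2 ^ 2 + R ^ 2 - r ^ 2) ^ 2 - 4 * R ^ 2 * (p 0 ^ 2 + p 2 ^ 2)


/-!
On the torus `x² + y² + z² + R² − r² = 2Rs` with `s = √(x² + z²)`, so `∇T = 8Rs · N` where
`N = ((s − R)x/s, y, (s − R)z/s)` points to `p` from the nearest point `c` of the core circle.
The line `t ↦ p + tN` is the ray from `c` through `p`, along which `N` stays parallel, and for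
`R = 2` the field `v_θ = (1/2s) · J N`, with `J` the quarter turn of the meridian half-plane,
stays orthogonal to it. So `t ↦ ⟪N, v_θ(p + tN)⟫` vanishes near `0`, and its derivative
`⟪N, Dv_θ(p) N⟫` is zero.
-/

open Topology

@[simp] lemma vec3_apply_zero (a b c : ℝ) : vec3 a b c 0 = a := rfl
@[simp] lemma vec3_apply_one (a b c : ℝ) : vec3 a b c 1 = b := rfl
@[simp] lemma vec3_apply_two (a b c : ℝ) : vec3 a b c 2 = c := rfl

lemma inner_E3_eq (u w : E3) : ⟪u, w⟫ = u 0 * w 0 + u 1 * w 1 + u 2 * w 2 := by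
  simp [PiLp.inner_apply, Fin.sum_univ_three, mul_comm]

lemma hasGradientAt_torusT (R r : ℝ) (p : E3) :
    HasGradientAt (torusT R r)
      (vec3 (4 * (p 0 ^ 2 + p 1 ^ 2 + p 2 ^ 2 + R ^ 2 - r ^ 2) * p 0 - 8 * R ^ 2 * p 0)
        (4 * (p 0 ^ 2 + p 1 ^ 2 + p 2 ^ 2 + R ^ 2 - r ^ 2) * p 1)
        (4 * (p 0 ^ 2 + p 1 ^ 2 + p 2 ^ 2 + R ^ 2 - r ^ 2) * p 2 - 8 * R ^ 2 * p 2)) p := by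
  have hsq (i : Fin 3) :=
    (hasDerivAt_pow 2 (p i)).comp_hasFDerivAt p (PiLp.hasFDerivAt_apply (𝕜 := ℝ) 2 p i)
  have hT := ((hasDerivAt_pow 2 _).comp_hasFDerivAt p
    (((((hsq 0).add (hsq 1)).add (hsq 2)).add_const (R ^ 2)).sub_const (r ^ 2))).sub
    (((hsq 0).add (hsq 2)).const_mul (4 * R ^ 2))
  rw [hasGradientAt_iff_hasFDerivAt]
  refine hT.congr_fderiv ?_
  ext v
  simp only [Pi.add_apply, Function.comp_apply, Nat.add_one_sub_one, pow_one, smul_add,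
    sub_apply, add_apply, smul_apply, PiLp.proj_apply, smul_eq_mul,
    InnerProductSpace.toDual_apply_apply, inner_E3_eq, vec3_apply_zero, vec3_apply_one,
    vec3_apply_two]
  ring

def axisDist (p : E3) : ℝ := √(p 0 ^ 2 + p 2 ^ 2)

def torusNormal (R : ℝ) (p : E3) : E3 :=
  vec3 ((axisDist p - R) / axisDist p * p 0) (p 1) ((axisDist p - R) / axisDist p * p 2)

section

variable {R r : ℝ} {p : E3}

lemma sq_add_sq_pos_of_torusT_eq_zero (hrR : r ^ 2 < R ^ 2) (hp : torusT R r p = 0) :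
    0 < p 0 ^ 2 + p 2 ^ 2 := by
  by_contra! h
  have h0 : p 0 ^ 2 + p 2 ^ 2 = 0 := le_antisymm h (by positivity)
  have : p 0 ^ 2 + p 1 ^ 2 + p 2 ^ 2 + R ^ 2 - r ^ 2 = 0 := by
    simpa [torusT, h0] using hp
  linarith [sq_nonneg (p 1)]

lemma eq_two_mul_axisDist_of_torusT_eq_zero (hR : 0 ≤ R) (hrR : r ^ 2 ≤ R ^ 2)
    (hp : torusT R r p = 0) :
    p 0 ^ 2 + p 1 ^ 2 + p 2 ^ 2 + R ^ 2 - r ^ 2 = 2 * R * axisDist p := by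
  have hs : axisDist p ^ 2 = p 0 ^ 2 + p 2 ^ 2 := Real.sq_sqrt (by positivity)
  refine (sq_eq_sq₀ (by nlinarith [sq_nonneg (p 0), sq_nonneg (p 1), sq_nonneg (p 2)])
    (by unfold axisDist; positivity)).1 ?_
  rw [torusT] at hp
  linear_combination hp - 4 * R ^ 2 * hs

lemma gradient_torusT_eq_smul_torusNormal (hR : 0 ≤ R) (hrR : r ^ 2 < R ^ 2)
    (hp : torusT R r p = 0) :
    gradient (torusT R r) p = (8 * R * axisDist p) • torusNormal R p := by
  have hs : axisDist p ≠ 0 := (Real.sqrt_pos.2 (sq_add_sq_pos_of_torusT_eq_zero hrR hp)).ne'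
  rw [(hasGradientAt_torusT R r p).gradient,
    eq_two_mul_axisDist_of_torusT_eq_zero hR hrR.le hp]
  ext i
  fin_cases i <;>
    simp only [torusNormal, PiLp.smul_apply, smul_eq_mul, Fin.zero_eta, Fin.mk_one, Fin.reduceFinMk,
      vec3_apply_zero, vec3_apply_one, vec3_apply_two] <;>
    field_simp <;> ring

lemma axisDist_add_smul_torusNormal {t : ℝ}
    (ht : 0 ≤ 1 + t * ((axisDist p - R) / axisDist p)) :
    axisDist (p + t • torusNormal R p) =
      (1 + t * ((axisDist p - R) / axisDist p)) * axisDist p := by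
  set k := (axisDist p - R) / axisDist p
  have : (p + t • torusNormal R p) 0 ^ 2 + (p + t • torusNormal R p) 2 ^ 2 =
      (1 + t * k) ^ 2 * (p 0 ^ 2 + p 2 ^ 2) := by
    simp only [torusNormal, PiLp.add_apply, PiLp.smul_apply, smul_eq_mul, vec3_apply_zero,
      vec3_apply_two]
    ring
  rw [axisDist, this, Real.sqrt_mul (sq_nonneg _), Real.sqrt_sq ht, axisDist]

lemma inner_torusNormal_vTheta_add_smul (hs : 0 < axisDist p) {t : ℝ}
    (ht : 0 < 1 + t * ((axisDist p - 2) / axisDist p)) :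
    ⟪torusNormal 2 p, vTheta (p + t • torusNormal 2 p)⟫ = 0 := by
  have hdist := axisDist_add_smul_torusNormal ht.le
  have hσ : (1 + t * ((axisDist p - 2) / axisDist p)) * axisDist p ≠ 0 := (mul_pos ht hs).ne'
  have hs2 : axisDist p ^ 2 = p 0 ^ 2 + p 2 ^ 2 := Real.sq_sqrt (by positivity)
  rw [vTheta, ← axisDist, hdist, inner_E3_eq]
  simp only [torusNormal, PiLp.add_apply, PiLp.smul_apply, smul_eq_mul, vec3_apply_zero,
    vec3_apply_one, vec3_apply_two]
  field_simp
  rw [mul_zero, div_eq_zero_iff]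
  left
  linear_combination (p 1 * (axisDist p - 2) * (1 + t)) * hs2

lemma differentiableAt_vTheta_s14 (hs : 0 < axisDist p) : DifferentiableAt ℝ vTheta p := by
  have hq : p 0 ^ 2 + p 2 ^ 2 ≠ 0 := (Real.sqrt_pos.1 hs).ne'
  have hs₀ : √(p 0 ^ 2 + p 2 ^ 2) ≠ 0 := hs.ne'
  have hs₂ : 2 * √(p 0 ^ 2 + p 2 ^ 2) ≠ 0 := mul_ne_zero two_ne_zero hs₀
  rw [differentiableAt_euclidean]
  intro i
  fin_cases i <;>
    simp only [vTheta, PiLp.smul_apply, smul_eq_mul, Fin.zero_eta, Fin.mk_one, Fin.reduceFinMk,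
      vec3_apply_zero, vec3_apply_one, vec3_apply_two] <;>
    fun_prop (disch := assumption)

lemma inner_torusNormal_fderiv_vTheta (hs : 0 < axisDist p) :
    ⟪torusNormal 2 p, fderiv ℝ vTheta p (torusNormal 2 p)⟫ = 0 := by
  set N := torusNormal 2 p
  have hline : HasDerivAt (fun t : ℝ => p + t • N) N 0 := by
    simpa using ((hasDerivAt_id (0 : ℝ)).smul_const N).const_add p
  have hderiv : HasDerivAt (fun t : ℝ => ⟪N, vTheta (p + t • N)⟫) ⟪N, fderiv ℝ vTheta p N⟫ 0 := by
    have hv : HasFDerivAt vTheta (fderiv ℝ vTheta p) (p + (0 : ℝ) • N) := by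
      simpa using (differentiableAt_vTheta_s14 hs).hasFDerivAt
    exact ((innerSL ℝ N).hasFDerivAt.comp_hasDerivAt 0 (hv.comp_hasDerivAt 0 hline) :)
  have hpos : ∀ᶠ t in 𝓝 (0 : ℝ), 0 < 1 + t * ((axisDist p - 2) / axisDist p) :=
    continuousAt_const.eventually_lt (by fun_prop) (by simp)
  have hzero : (fun t : ℝ => ⟪N, vTheta (p + t • N)⟫) =ᶠ[𝓝 0] fun _ => 0 :=
    hpos.mono fun t ht => inner_torusNormal_vTheta_add_smul hs ht
  exact hderiv.unique ((hasDerivAt_const 0 0).congr_of_eventuallyEq hzero)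

end

/-- On the torus `{T = 0}` with `R = 2`, `r = 1/2`, the normal–normal part of the
Jacobian of `v_θ` vanishes in the direction of `∇T`:
`∇T(p) · (Dv_θ(p) ∇T(p)) = 0`. -/
theorem vTheta_normal_normal_jacobian_eq_zero (p : E3)
    (hp : torusT 2 (1 / 2) p = 0) :
    ⟪gradient (torusT 2 (1 / 2)) p,
      fderiv ℝ vTheta p (gradient (torusT 2 (1 / 2)) p)⟫ = 0 := by
  have hs : 0 < axisDist p := Real.sqrt_pos.2 (sq_add_sq_pos_of_torusT_eq_zero (by norm_num) hp)
  rw [gradient_torusT_eq_smul_torusNormal (by norm_num) (by norm_num) hp, map_smul,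
    inner_smul_left, inner_smul_right, inner_torusNormal_fderiv_vTheta hs, mul_zero, mul_zero]
end
end
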